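/- arXiv:2006.13002 — 5 statements merged into one kernel-verified Lean document; each statement's English description precedes it below -/
import Mathlib

section
/- A non-self-overlapping binary string of length n (one whose only autocorrelation is the trivial one) has expected wait time exactly 2^n, and this is the minimum expected wait time among all binary strings of length n. -/
/-- Extend a finite binary string (`true` = heads, `false` = tails) to an
infinite sequence by padding with `false`. -/
def padFalse {i : ℕ} (v : Fin i → Bool) : ℕ → Bool :=
  fun n => if h : n < i then v ⟨n, h⟩ else false

/-- The pattern `w` occurs in the flip sequence `s` (flip `m` is `s (m-1)`)
as a consecutive substring ending at flip `m`. -/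
def OccursEndingAt (w : List Bool) (s : ℕ → Bool) (m : ℕ) : Prop :=
  w.length ≤ m ∧ ∀ j : Fin w.length, s (m - w.length + (j : ℕ)) = w.get j

/-- The first occurrence of `w` in `s` ends exactly at flip `m`. -/
def FirstOccurEndsAt (w : List Bool) (s : ℕ → Bool) (m : ℕ) : Prop :=
  OccursEndingAt w s m ∧ ∀ k < m, ¬ OccursEndingAt w s k

/-- The number of binary strings of length `i` that end with `w` and contain
no other occurrence of `w` (`w`-first-timers of length `i`). -/
noncomputable def firstTimerCount (w : List Bool) (i : ℕ) : ℕ :=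
  Nat.card {v : Fin i → Bool // FirstOccurEndsAt w (padFalse v) i}

/-- The probability that `w` first appears at exactly the `i`-th fair coin flip. -/
noncomputable def firstTimeProb (w : List Bool) (i : ℕ) : ℝ :=
  (firstTimerCount w i : ℝ) / 2 ^ i

/-- The expected number of fair coin flips until `w` first appears. -/
noncomputable def expectedWaitTime (w : List Bool) : ℝ :=
  ∑' i : ℕ, (i : ℝ) * firstTimeProb w i

/-!
Let `q i` be the fraction of strings of length `i` that avoid `w`, i.e. the probability that the
wait time `T` exceeds `i`; then `E T = ∑ q i`. A string of length `i + |w|` in which `w` first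
appears at the end is a `w`-avoiding string of length `i` followed by `w`, so
`P(T = i + |w|) ≤ 2^{-|w|} q i`. Summing over `i` gives `1 ≤ 2^{-|w|} E T`. If `w` is
non-self-overlapping, appending `w` to a `w`-avoiding string never creates an earlier copy of `w`,
so the inequality is an equality. Convergence comes from `q (i + |w|) ≤ (1 - 2^{-|w|}) q i`.
-/

open Filter Topology Finset

section Series

variable {f : ℕ → ℝ}

lemma Antitone.summable_of_le_mul_add (hf : Antitone f) (hf0 : ∀ i, 0 ≤ f i) {m : ℕ}
    (hm : 0 < m) {r : ℝ} (hr0 : 0 ≤ r) (hr1 : r < 1) (h : ∀ i, f (i + m) ≤ r * f i) :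
    Summable f := by
  have : NeZero m := ⟨hm.ne'⟩
  have hgeom : ∀ k, f (m * k + 0) ≤ f 0 * r ^ k := by
    intro k
    induction k with
    | zero => simp
    | succ k ih =>
      calc f (m * (k + 1) + 0) = f (m * k + 0 + m) := by ring_nf
        _ ≤ r * f (m * k + 0) := h _
        _ ≤ r * (f 0 * r ^ k) := by gcongr
        _ = f 0 * r ^ (k + 1) := by ring
  rw [← summable_indicator_mod_iff (m := m) hf 0, ← Nat.cast_zero,
    summable_indicator_mod_iff_summable]
  exact ((summable_geometric_of_lt_one hr0 hr1).mul_left (f 0)).of_nonneg_of_le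
    (fun _ => hf0 _) hgeom

lemma Summable.tendsto_natCast_mul_of_antitone (hs : Summable f) (hf : Antitone f) :
    Tendsto (fun n : ℕ => (n : ℝ) * f n) atTop (𝓝 0) := by
  have hf0 : ∀ n, 0 ≤ f n := fun n => not_lt.mp fun h => not_summable_of_antitone_of_neg hf h hs
  set S := fun n => ∑ i ∈ range n, f i
  have hS : Tendsto S atTop (𝓝 (∑' i, f i)) := hs.hasSum.tendsto_sum_nat
  have hgap : Tendsto (fun n => 2 * (S n - S (n / 2))) atTop (𝓝 0) := by
    simpa using (hS.sub (hS.comp (Nat.tendsto_div_const_atTop two_ne_zero))).const_mul 2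
  refine squeeze_zero (fun n => mul_nonneg n.cast_nonneg (hf0 n)) (fun n => ?_) hgap
  -- the `n - n / 2` terms of `S n - S (n / 2)` are all at least `f n`
  have hhalf : (n : ℝ) ≤ 2 * ((n - n / 2 : ℕ) : ℝ) := by
    rw [Nat.cast_sub (Nat.div_le_self n 2)]
    have := Nat.cast_div_le (α := ℝ) (m := n) (n := 2)
    push_cast at this ⊢
    linarith
  have hblock : ((n - n / 2 : ℕ) : ℝ) * f n ≤ S n - S (n / 2) := by
    rw [← sum_Ico_eq_sub _ (Nat.div_le_self n 2)]
    simpa using card_nsmul_le_sum (Ico (n / 2) n) f (f n)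
      fun i hi => hf (mem_Ico.1 hi).2.le
  nlinarith [hf0 n]

lemma Antitone.hasSum_sub_succ (hf : Antitone f) {l : ℝ} (h : Tendsto f atTop (𝓝 l)) :
    HasSum (fun i => f i - f (i + 1)) (f 0 - l) := by
  rw [hasSum_iff_tendsto_nat_of_nonneg fun i => sub_nonneg.2 (hf i.le_succ)]
  simp_rw [sum_range_sub']
  exact h.const_sub _

lemma Antitone.hasSum_succ_mul_sub (hf : Antitone f) (hs : Summable f) :
    HasSum (fun i : ℕ => ((i : ℝ) + 1) * (f i - f (i + 1))) (∑' i, f i) := by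
  have hpartial : ∀ N, ∑ i ∈ range N, ((i : ℝ) + 1) * (f i - f (i + 1)) =
      ∑ i ∈ range N, f i - N * f N := by
    intro N
    induction N with
    | zero => simp
    | succ N ih => rw [sum_range_succ, ih, sum_range_succ]; push_cast; ring
  rw [hasSum_iff_tendsto_nat_of_nonneg
    fun i => mul_nonneg (by positivity) (sub_nonneg.2 (hf i.le_succ))]
  simp_rw [hpartial]
  simpa using hs.hasSum.tendsto_sum_nat.sub (hs.tendsto_natCast_mul_of_antitone hf)

end Series

def NonSelfOverlapping (w : List Bool) : Prop :=
  ∀ i, 1 ≤ i → i ≤ w.length - 1 → List.drop i w ≠ List.take (w.length - i) w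

def Avoids (w : List Bool) (s : ℕ → Bool) (m : ℕ) : Prop :=
  ∀ k ≤ m, ¬ OccursEndingAt w s k

noncomputable def avoidCount (w : List Bool) (i : ℕ) : ℕ :=
  Nat.card {v : Fin i → Bool // Avoids w (padFalse v) i}

section Occurrences

variable {w : List Bool} {s t : ℕ → Bool} {m : ℕ}

lemma occursEndingAt_congr (h : ∀ k < m, s k = t k) :
    OccursEndingAt w s m ↔ OccursEndingAt w t m :=
  and_congr_right fun _ => forall_congr' fun j => by rw [h _ (by have := j.isLt; omega)]

lemma avoids_congr (h : ∀ k < m, s k = t k) : Avoids w s m ↔ Avoids w t m :=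
  forall₂_congr fun _ hk => not_congr (occursEndingAt_congr fun i hi => h i (by omega))

lemma Avoids.mono {m' : ℕ} (h : Avoids w s m') (hm : m ≤ m') : Avoids w s m :=
  fun k hk => h k (hk.trans hm)

lemma avoids_succ_iff : Avoids w s (m + 1) ↔ Avoids w s m ∧ ¬ OccursEndingAt w s (m + 1) :=
  ⟨fun h => ⟨h.mono m.le_succ, h _ le_rfl⟩, fun ⟨h, h'⟩ k hk =>
    (Nat.le_succ_iff.1 hk).elim (h k) fun e => e ▸ h'⟩

lemma firstOccurEndsAt_succ_iff :
    FirstOccurEndsAt w s (m + 1) ↔ Avoids w s m ∧ OccursEndingAt w s (m + 1) := by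
  simp only [FirstOccurEndsAt, Avoids, Nat.lt_succ_iff, and_comm]

end Occurrences

section Append

variable {w : List Bool} {i n : ℕ} (u : Fin i → Bool) (z : Fin n → Bool)

lemma padFalse_append_of_lt {k : ℕ} (hk : k < i) :
    padFalse (Fin.append u z) k = padFalse u k := by
  rw [padFalse, padFalse, dif_pos (by omega), dif_pos hk]
  exact Fin.append_left u z ⟨k, hk⟩

lemma padFalse_append_add (l : Fin n) : padFalse (Fin.append u z) (i + l) = z l := by
  rw [padFalse, dif_pos (by omega)]
  exact Fin.append_right u z l

lemma avoids_padFalse_append_iff {m : ℕ} (hm : m ≤ i) :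
    Avoids w (padFalse (Fin.append u z)) m ↔ Avoids w (padFalse u) m :=
  avoids_congr fun _ hk => padFalse_append_of_lt u z (by omega)

lemma occursEndingAt_padFalse_append_iff (z : Fin w.length → Bool) :
    OccursEndingAt w (padFalse (Fin.append u z)) (i + w.length) ↔ z = w.get := by
  simp only [OccursEndingAt, Nat.add_sub_cancel, padFalse_append_add, Nat.le_add_left, true_and,
    funext_iff]

lemma not_occursEndingAt_padFalse_append_get (hnso : NonSelfOverlapping w) {k : ℕ} (hik : i < k)
    (hk : k < i + w.length) : ¬ OccursEndingAt w (padFalse (Fin.append u w.get)) k := by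
  rintro ⟨hnk, hocc⟩
  -- this occurrence overlaps the final copy of `w` in `|w| - d` flips, so `w` has period `d`
  set d := i + w.length - k
  refine hnso d (by omega) (by omega) (List.ext_getElem (by simp) fun l h1 _ => ?_)
  rw [List.length_drop] at h1
  have hl : l < w.length := by omega
  have := hocc ⟨d + l, by omega⟩
  rw [show k - w.length + (d + l) = i + (⟨l, hl⟩ : Fin w.length) by dsimp only; omega,
    padFalse_append_add] at this
  simpa using this.symm

lemma avoids_and_eq_get_of_firstOccurEndsAt_append (hw : 0 < w.length) (z : Fin w.length → Bool)
    (h : FirstOccurEndsAt w (padFalse (Fin.append u z)) (i + w.length)) :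
    Avoids w (padFalse u) i ∧ z = w.get :=
  ⟨(avoids_padFalse_append_iff u z le_rfl).1 fun k hk => h.2 k (by omega),
    (occursEndingAt_padFalse_append_iff u z).1 h.1⟩

lemma firstOccurEndsAt_padFalse_append_get (hnso : NonSelfOverlapping w)
    (hu : Avoids w (padFalse u) i) :
    FirstOccurEndsAt w (padFalse (Fin.append u w.get)) (i + w.length) := by
  refine ⟨(occursEndingAt_padFalse_append_iff u _).2 rfl, fun k hk => ?_⟩
  rcases le_or_gt k i with hki | hik
  · exact (avoids_padFalse_append_iff u w.get le_rfl).2 hu k hki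
  · exact not_occursEndingAt_padFalse_append_get u hnso hik hk

end Append

section Counting

lemma Nat.card_subtype_fin_append {α : Type*} {i n : ℕ} (P : (Fin (i + n) → α) → Prop) :
    Nat.card {v // P v} =
      Nat.card {x : (Fin i → α) × (Fin n → α) // P (Fin.append x.1 x.2)} :=
  (Nat.card_congr ((Fin.appendEquiv i n).subtypeEquivOfSubtype (p := P))).symm

variable (w : List Bool) (i : ℕ)

lemma two_mul_avoidCount :
    2 * avoidCount w i = avoidCount w (i + 1) + firstTimerCount w (i + 1) := by
  classical
  let B := {v : Fin (i + 1) → Bool // Avoids w (padFalse v) i}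
  have hB : Nat.card B = avoidCount w i * 2 := by
    rw [Nat.card_subtype_fin_append, Nat.card_congr (Equiv.subtypeEquivRight
        fun x : (Fin i → Bool) × (Fin 1 → Bool) => avoids_padFalse_append_iff x.1 x.2 le_rfl),
      Nat.card_congr (Equiv.prodSubtypeFstEquivSubtypeProd (p := fun u => Avoids w (padFalse u) i)),
      Nat.card_prod, avoidCount]
    simp
  have hB' : Nat.card B = firstTimerCount w (i + 1) + avoidCount w (i + 1) := by
    rw [← Nat.card_congr (Equiv.sumCompl fun v : B => OccursEndingAt w (padFalse v.1) (i + 1)),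
      Nat.card_sum, firstTimerCount, avoidCount]
    congr 1
    · exact Nat.card_congr ((Equiv.subtypeSubtypeEquivSubtypeInter _ _).trans
        (Equiv.subtypeEquivRight fun _ => firstOccurEndsAt_succ_iff.symm))
    · exact Nat.card_congr ((Equiv.subtypeSubtypeEquivSubtypeInter _ _).trans
        (Equiv.subtypeEquivRight fun _ => avoids_succ_iff.symm))
  omega

lemma avoidCount_add_length_le :
    avoidCount w (i + w.length) ≤ avoidCount w i * (2 ^ w.length - 1) := by
  classical
  rw [avoidCount, Nat.card_subtype_fin_append]
  calc _ ≤ Nat.card {x : (Fin i → Bool) × (Fin w.length → Bool) //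
        Avoids w (padFalse x.1) i ∧ x.2 ≠ w.get} :=
        Nat.card_le_card_of_injective _ (Subtype.impEmbedding _ _ fun x hx =>
          ⟨(avoids_padFalse_append_iff x.1 x.2 le_rfl).1 (hx.mono (Nat.le_add_right _ _)),
            mt (occursEndingAt_padFalse_append_iff x.1 x.2).2 (hx _ le_rfl)⟩).injective
    _ = _ := by
      rw [Nat.card_congr (Equiv.subtypeProdEquivProd (p := fun u => Avoids w (padFalse u) i)
          (q := fun z => z ≠ w.get)), Nat.card_prod, avoidCount,
        Nat.card_eq_fintype_card (α := {z // z ≠ _}), Fintype.card_subtype_compl]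
      simp

lemma card_avoids_prod_eq_get : Nat.card {x : (Fin i → Bool) × (Fin w.length → Bool) //
      Avoids w (padFalse x.1) i ∧ x.2 = w.get} = avoidCount w i := by
  rw [Nat.card_congr (Equiv.subtypeProdEquivProd (p := fun u => Avoids w (padFalse u) i)
    (q := fun z => z = w.get)), Nat.card_prod, avoidCount]
  simp

lemma firstTimerCount_add_length_le (hw : 0 < w.length) :
    firstTimerCount w (i + w.length) ≤ avoidCount w i := by
  rw [firstTimerCount, Nat.card_subtype_fin_append, ← card_avoids_prod_eq_get]
  exact Nat.card_le_card_of_injective _ (Subtype.impEmbedding _ _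
    fun x : (Fin i → Bool) × (Fin w.length → Bool) =>
      avoids_and_eq_get_of_firstOccurEndsAt_append x.1 hw x.2).injective

lemma firstTimerCount_add_length (hnso : NonSelfOverlapping w) (hw : 0 < w.length) :
    firstTimerCount w (i + w.length) = avoidCount w i := by
  rw [firstTimerCount, Nat.card_subtype_fin_append, ← card_avoids_prod_eq_get]
  refine Nat.card_congr (Equiv.subtypeEquivRight fun x =>
    ⟨avoids_and_eq_get_of_firstOccurEndsAt_append x.1 hw x.2, ?_⟩)
  rintro ⟨hu, hz⟩
  obtain ⟨u, z⟩ := x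
  subst hz
  exact firstOccurEndsAt_padFalse_append_get u hnso hu

end Counting

noncomputable def survivalProb (w : List Bool) (i : ℕ) : ℝ :=
  (avoidCount w i : ℝ) / 2 ^ i

section Probabilities

variable {w : List Bool}

lemma survivalProb_eq_add (i : ℕ) :
    survivalProb w i = survivalProb w (i + 1) + firstTimeProb w (i + 1) := by
  have h : (2 * avoidCount w i : ℝ) = avoidCount w (i + 1) + firstTimerCount w (i + 1) := by
    exact_mod_cast two_mul_avoidCount w i
  rw [survivalProb, survivalProb, firstTimeProb, ← add_div, ← h, pow_succ]
  field_simp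

lemma survivalProb_sub_succ (i : ℕ) :
    survivalProb w i - survivalProb w (i + 1) = firstTimeProb w (i + 1) := by
  rw [survivalProb_eq_add i, add_sub_cancel_left]

lemma antitone_survivalProb : Antitone (survivalProb w) :=
  antitone_nat_of_succ_le fun i => by
    rw [survivalProb_eq_add i, le_add_iff_nonneg_right, firstTimeProb]
    positivity

lemma survivalProb_zero (hw : w ≠ []) : survivalProb w 0 = 1 := by
  have : Nonempty {v : Fin 0 → Bool // Avoids w (padFalse v) 0} :=
    ⟨⟨finZeroElim, fun k hk h =>
      hw (List.eq_nil_of_length_eq_zero (by have := h.1; omega))⟩⟩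
  simp [survivalProb, avoidCount, Nat.card_unique]

lemma survivalProb_add_length_le (i : ℕ) :
    survivalProb w (i + w.length) ≤ (1 - (2 ^ w.length)⁻¹) * survivalProb w i := by
  have h : (avoidCount w (i + w.length) : ℝ) ≤ avoidCount w i * (2 ^ w.length - 1) := by
    have := Nat.one_le_two_pow (n := w.length)
    exact_mod_cast avoidCount_add_length_le w i
  rw [survivalProb, survivalProb, div_le_iff₀ (by positivity)]
  calc _ ≤ (avoidCount w i : ℝ) * (2 ^ w.length - 1) := h
    _ = _ := by rw [pow_add]; field_simp

lemma summable_survivalProb (hw : w ≠ []) : Summable (survivalProb w) :=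
  antitone_survivalProb.summable_of_le_mul_add (fun i => by rw [survivalProb]; positivity)
    (List.length_pos_iff.2 hw) (sub_nonneg.2 (inv_le_one_of_one_le₀ (one_le_pow₀ one_le_two)))
    (sub_lt_self _ (by positivity)) survivalProb_add_length_le

lemma firstTimeProb_eq_zero_of_lt {i : ℕ} (h : i < w.length) : firstTimeProb w i = 0 := by
  have : IsEmpty {v : Fin i → Bool // FirstOccurEndsAt w (padFalse v) i} :=
    ⟨fun v => absurd v.2.1.1 (by omega)⟩
  simp [firstTimeProb, firstTimerCount]

lemma hasSum_firstTimeProb (hw : w ≠ []) : HasSum (firstTimeProb w) 1 := by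
  have h := antitone_survivalProb.hasSum_sub_succ (summable_survivalProb hw).tendsto_atTop_zero
  rw [survivalProb_zero hw, sub_zero] at h
  rw [← hasSum_nat_add_iff' 1, sum_range_one,
    firstTimeProb_eq_zero_of_lt (List.length_pos_iff.2 hw), sub_zero]
  simpa only [survivalProb_sub_succ] using h

lemma firstTimeProb_add_length_le (hw : w ≠ []) (i : ℕ) :
    firstTimeProb w (i + w.length) ≤ survivalProb w i / 2 ^ w.length := by
  rw [firstTimeProb, survivalProb, div_div, ← pow_add]
  gcongr
  exact_mod_cast firstTimerCount_add_length_le w i (List.length_pos_iff.2 hw)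

lemma firstTimeProb_add_length (hw : w ≠ []) (hnso : NonSelfOverlapping w) (i : ℕ) :
    firstTimeProb w (i + w.length) = survivalProb w i / 2 ^ w.length := by
  rw [firstTimeProb, survivalProb, div_div, ← pow_add,
    firstTimerCount_add_length w i hnso (List.length_pos_iff.2 hw)]

lemma hasSum_firstTimeProb_add_length (hw : w ≠ []) :
    HasSum (fun i => firstTimeProb w (i + w.length)) 1 := by
  rw [hasSum_nat_add_iff, sum_eq_zero fun i hi => firstTimeProb_eq_zero_of_lt
    (mem_range.1 hi), add_zero]
  exact hasSum_firstTimeProb hw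

lemma expectedWaitTime_eq_tsum_survivalProb (hw : w ≠ []) :
    expectedWaitTime w = ∑' i, survivalProb w i := by
  have h := antitone_survivalProb.hasSum_succ_mul_sub (summable_survivalProb hw)
  refine ((hasSum_nat_add_iff' 1).mp ?_).tsum_eq
  simpa [survivalProb_sub_succ] using h

lemma two_pow_length_le_expectedWaitTime (hw : w ≠ []) : 2 ^ w.length ≤ expectedWaitTime w := by
  have h := hasSum_le (firstTimeProb_add_length_le hw) (hasSum_firstTimeProb_add_length hw)
    ((summable_survivalProb hw).hasSum.div_const _)
  rwa [expectedWaitTime_eq_tsum_survivalProb hw, ← one_le_div₀ (by positivity)]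

lemma expectedWaitTime_eq_two_pow_length (hw : w ≠ []) (hnso : NonSelfOverlapping w) :
    expectedWaitTime w = 2 ^ w.length := by
  have h := (hasSum_firstTimeProb_add_length hw).unique
    (by simpa only [firstTimeProb_add_length hw hnso] using
      (summable_survivalProb hw).hasSum.div_const (2 ^ w.length))
  rw [eq_div_iff (by positivity), one_mul] at h
  rw [expectedWaitTime_eq_tsum_survivalProb hw, h]

end Probabilities

/-- A non-self-overlapping binary string of length `n` (no nontrivial
autocorrelation: for `1 ≤ i ≤ n - 1` the suffix of length `n - i` differs from
the prefix of length `n - i`) has expected wait time exactly `2^n`, and this is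
the minimum expected wait time among all binary strings of length `n`. -/
theorem expectedWaitTime_nonSelfOverlapping (n : ℕ) (w : List Bool)
    (hw : w.length = n) (hne : w ≠ [])
    (hnso : ∀ i, 1 ≤ i → i ≤ n - 1 → List.drop i w ≠ List.take (w.length - i) w) :
    expectedWaitTime w = 2 ^ n ∧
      ∀ v : List Bool, v.length = n → (2 : ℝ) ^ n ≤ expectedWaitTime v := by
  subst hw
  refine ⟨expectedWaitTime_eq_two_pow_length hne hnso, fun v hv => ?_⟩
  rw [← hv]
  exact two_pow_length_le_expectedWaitTime
    (List.ne_nil_of_length_pos (hv ▸ List.length_pos_iff.2 hne))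
end

section
/- The number of binary strings of length i that end in HT and contain exactly one occurrence of HT (namely at the end) is i - 1, for i >= 1. -/
/-- The canonical HT-first-timer: `a` falses, then heads up to position `i-2`,
then a final tail. -/
def htString (i : ℕ) (a : ℕ) : Fin i → Bool :=
  fun n => decide (a ≤ (n : ℕ) ∧ (n : ℕ) < i - 1)

lemma padFalse_lt {i : ℕ} (v : Fin i → Bool) {n : ℕ} (h : n < i) :
    padFalse v n = v ⟨n, h⟩ := by
  simp [padFalse, h]

lemma occurs_HT_iff (s : ℕ → Bool) (m : ℕ) :
    OccursEndingAt [true, false] s m ↔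
      2 ≤ m ∧ s (m - 2) = true ∧ s (m - 1) = false := by
  constructor
  · rintro ⟨hl, hj⟩
    simp only [List.length] at hl
    refine ⟨hl, ?_, ?_⟩
    · have := hj ⟨0, by norm_num⟩
      simpa using this
    · have := hj ⟨1, by norm_num⟩
      simp only [List.length, List.get] at this
      have e : m - 2 + 1 = m - 1 := by omega
      rwa [e] at this
  · rintro ⟨hm, h0, h1⟩
    refine ⟨hm, ?_⟩
    intro j
    fin_cases j
    · simpa using h0
    · simp only [List.length, List.get]
      have e : m - 2 + 1 = m - 1 := by omega
      rw [e, h1]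

lemma first_iff (i : ℕ) (v : Fin i → Bool) :
    FirstOccurEndsAt [true, false] (padFalse v) i ↔
      ∃ a : Fin (i - 1), v = htString i (a : ℕ) := by
  constructor
  · rintro ⟨hocc, hno⟩
    rw [occurs_HT_iff] at hocc
    obtain ⟨h2, hH, hT⟩ := hocc
    -- monotonicity: once true, stays true up to position i-2
    have mono : ∀ n, n ≤ i - 2 → padFalse v n = true →
        ∀ k, n ≤ k → k ≤ i - 2 → padFalse v k = true := by
      intro n hn hvn k hnk hk
      induction k with
      | zero =>
        have : n = 0 := by omega
        rwa [this] at hvn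
      | succ k ih =>
        rcases Nat.lt_or_ge n (k+1) with h | h
        · have hk' : padFalse v k = true := ih (by omega) (by omega)
          by_contra hfalse
          have hval : padFalse v (k+1) = false := by
            cases hb : padFalse v (k+1) <;> simp_all
          have : OccursEndingAt [true, false] (padFalse v) (k+2) := by
            rw [occurs_HT_iff]
            refine ⟨by omega, ?_, ?_⟩
            · simpa using hk'
            · simpa using hval
          exact hno (k+2) (by omega) this
        · have : n = k + 1 := by omega
          rwa [this] at hvn
    have hEx : ∃ n, padFalse v n = true := ⟨i - 2, hH⟩
    set a := Nat.find hEx with ha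
    have haspec : padFalse v a = true := Nat.find_spec hEx
    have hale : a ≤ i - 2 := Nat.find_le hH
    refine ⟨⟨a, by omega⟩, ?_⟩
    funext n
    simp only [htString]
    rcases Nat.lt_or_ge (n : ℕ) (i - 1) with hlt | hge
    · rcases Nat.lt_or_ge (n : ℕ) a with h | h
      · have hne : ¬ padFalse v (n : ℕ) = true := Nat.find_min hEx h
        have : padFalse v (n : ℕ) = v n := by
          rw [padFalse_lt v n.isLt]
        rw [this] at hne
        simp only [Bool.not_eq_true] at hne
        rw [hne]
        simp
        omega
      · have : padFalse v (n : ℕ) = true :=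
          mono a hale haspec (n : ℕ) h (by omega)
        rw [padFalse_lt v n.isLt] at this
        rw [this]
        simp
        exact ⟨h, hlt⟩
    · have hn : (n : ℕ) = i - 1 := by have := n.isLt; omega
      have : padFalse v (i - 1) = v n := by
        rw [padFalse_lt v (show i - 1 < i by omega)]
        congr 1
        exact (Fin.ext hn.symm)
      rw [this] at hT
      rw [hT]
      simp
      omega
  · rintro ⟨a, rfl⟩
    have ha : (a : ℕ) < i - 1 := a.isLt
    have h2 : 2 ≤ i := by omega
    constructor
    · rw [occurs_HT_iff]
      refine ⟨h2, ?_, ?_⟩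
      · rw [padFalse_lt _ (show i - 2 < i by omega)]
        simp [htString]
        omega
      · rw [padFalse_lt _ (show i - 1 < i by omega)]
        simp [htString]
    · intro k hk hocc
      rw [occurs_HT_iff] at hocc
      obtain ⟨hk2, hH, hT⟩ := hocc
      rw [padFalse_lt _ (show k - 2 < i by omega)] at hH
      rw [padFalse_lt _ (show k - 1 < i by omega)] at hT
      simp [htString] at hH hT
      omega

/-- The number of binary strings of length `i ≥ 1` that end in HT and contain
exactly one occurrence of HT (namely at the end) is `i - 1`. -/
theorem firstTimerCount_HT (i : ℕ) (hi : 1 ≤ i) :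
    firstTimerCount [true, false] i = i - 1 := by
  have hinj : Function.Injective (fun a : Fin (i - 1) => htString i (a : ℕ)) := by
    intro a b hab
    by_contra hne
    have hne' : (a : ℕ) ≠ (b : ℕ) := fun h => hne (Fin.ext h)
    rcases Nat.lt_or_ge (a : ℕ) (b : ℕ) with h | h
    · have := congrFun hab ⟨(a : ℕ), by omega⟩
      simp [htString] at this
      omega
    · have hlt : (b : ℕ) < (a : ℕ) := by omega
      have := congrFun hab ⟨(b : ℕ), by omega⟩
      simp [htString] at this
      omega
  have hcard : firstTimerCount [true, false] i =
      Nat.card (Set.range (fun a : Fin (i - 1) => htString i (a : ℕ))) := by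
    unfold firstTimerCount
    apply Nat.card_congr
    apply Equiv.subtypeEquivRight
    intro v
    rw [first_iff]
    constructor
    · rintro ⟨a, rfl⟩; exact ⟨a, rfl⟩
    · rintro ⟨a, rfl⟩; exact ⟨a, rfl⟩
  rw [hcard, Nat.card_range_of_injective hinj, Nat.card_eq_fintype_card,
    Fintype.card_fin]
end

section
/- The probability that the pattern HT first appears at exactly the i-th flip of a fair coin is (i-1)/2^i. -/
theorem Bool.exists_eq_decide_le_of_monotone {u : ℕ → Bool} (hu : Monotone u) {m : ℕ}
    (hm : u m = true) : ∃ a ≤ m, ∀ n, u n = decide (a ≤ n) := by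
  have hex : ∃ n, u n = true := ⟨m, hm⟩
  refine ⟨Nat.find hex, Nat.find_min' hex hm, fun n => ?_⟩
  rw [Bool.eq_iff_iff, decide_eq_true_iff, Nat.find_le_iff]
  refine ⟨fun hn => ⟨n, le_rfl, hn⟩, fun ⟨k, hkn, hk⟩ => ?_⟩
  exact Bool.le_iff_imp.1 (hu hkn) hk

theorem padFalse_of_lt {i : ℕ} (v : Fin i → Bool) {n : ℕ} (hn : n < i) :
    padFalse v n = v ⟨n, hn⟩ :=
  dif_pos hn

theorem occursEndingAt_HT_iff (s : ℕ → Bool) (m : ℕ) :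
    OccursEndingAt [true, false] s m ↔ ∃ k, m = k + 2 ∧ s k = true ∧ s (k + 1) = false := by
  constructor
  · rintro ⟨hm, h⟩
    obtain ⟨k, rfl⟩ : ∃ k, m = k + 2 :=
      ⟨m - 2, by simp only [List.length_cons, List.length_nil] at hm; omega⟩
    exact ⟨k, rfl, by simpa using h 0, by simpa [add_assoc] using h 1⟩
  · rintro ⟨k, rfl, hk, hk'⟩
    refine ⟨by simp, fun j => ?_⟩
    fin_cases j <;> simpa [add_assoc]

theorem firstOccurEndsAt_HT_iff (s : ℕ → Bool) (m : ℕ) :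
    FirstOccurEndsAt [true, false] s (m + 1) ↔
      ∃ a < m, ∀ n ≤ m, s n = decide (a ≤ n ∧ n < m) := by
  simp only [FirstOccurEndsAt, occursEndingAt_HT_iff]
  constructor
  · rintro ⟨⟨k, hkm, hk, hk'⟩, hfirst⟩
    obtain rfl : m = k + 1 := by omega
    have hstep : ∀ n < k, s n ≤ s (n + 1) := fun n hn => Bool.le_iff_imp.2 fun hsn => by
      by_contra hsn'
      exact hfirst (n + 2) (by omega) ⟨n, rfl, hsn, by simpa using hsn'⟩
    have hmono : Monotone fun n => s (min n k) :=
      monotone_nat_of_le_succ fun n => by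
        rcases lt_or_ge n k with h | h
        · simpa [min_eq_left h.le, min_eq_left (Nat.succ_le_of_lt h)] using hstep n h
        · simp [min_eq_right h, min_eq_right (h.trans n.le_succ)]
    obtain ⟨a, hak, ha⟩ := Bool.exists_eq_decide_le_of_monotone hmono (m := k) (by simpa)
    refine ⟨a, by omega, fun n hn => ?_⟩
    rcases hn.lt_or_eq with hn | rfl
    · simpa [min_eq_left (Nat.le_of_lt_succ hn), hn] using ha n
    · simpa using hk'
  · rintro ⟨a, ham, hs⟩
    refine ⟨⟨m - 1, by omega, ?_, ?_⟩, ?_⟩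
    · rw [hs (m - 1) (by omega)]
      exact decide_eq_true (by omega)
    · rw [Nat.sub_add_cancel (by omega), hs m le_rfl]
      exact decide_eq_false (by omega)
    · rintro _ hk ⟨n, rfl, hn, hn'⟩
      rw [hs n (by omega), decide_eq_true_iff] at hn
      rw [hs (n + 1) (by omega), decide_eq_false_iff_not] at hn'
      omega

theorem firstTimerCount_HT_s10 (m : ℕ) : firstTimerCount [true, false] (m + 1) = m := by
  let word : Fin m → Fin (m + 1) → Bool := fun a n => decide ((a : ℕ) ≤ n ∧ (n : ℕ) < m)
  have hword : ∀ a, FirstOccurEndsAt [true, false] (padFalse (word a)) (m + 1) := fun a =>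
    (firstOccurEndsAt_HT_iff _ m).2
      ⟨a, a.2, fun n hn => by rw [padFalse_of_lt _ (Nat.lt_succ_of_le hn)]⟩
  let f : Fin m →
      {v : Fin (m + 1) → Bool // FirstOccurEndsAt [true, false] (padFalse v) (m + 1)} :=
    fun a => ⟨word a, hword a⟩
  have hbij : Function.Bijective f := by
    constructor
    · intro a b hab
      have h := fun n => congrFun (congrArg Subtype.val hab) n
      have ha := h ⟨a, by omega⟩
      have hb := h ⟨b, by omega⟩
      simp only [f, word, decide_eq_decide, Fin.val_fin_le] at ha hb
      omega
    · rintro ⟨v, hv⟩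
      obtain ⟨a, ham, ha⟩ := (firstOccurEndsAt_HT_iff _ m).1 hv
      refine ⟨⟨a, ham⟩, Subtype.ext (funext fun n => ?_)⟩
      simpa [f, word, padFalse_of_lt v n.2] using (ha n (Nat.le_of_lt_succ n.2)).symm
  rw [firstTimerCount, ← Nat.card_eq_of_bijective f hbij, Nat.card_fin]

/-- The probability that the pattern HT first appears at exactly the `i`-th
flip of a fair coin is `(i - 1) / 2^i`. -/
theorem firstTimeProb_HT (i : ℕ) (hi : 1 ≤ i) :
    firstTimeProb [true, false] i = ((i : ℝ) - 1) / 2 ^ i := by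
  obtain ⟨m, rfl⟩ := Nat.exists_eq_add_of_le' hi
  rw [firstTimeProb, firstTimerCount_HT_s10]
  push_cast
  ring
end

section
/- The number of HHT-first-timer binary strings of length i equals the number of binary strings of length i - 3 that avoid the substring HHT (for i >= 3). -/
lemma occ_iff (s : ℕ → Bool) (m : ℕ) :
    OccursEndingAt [true, true, false] s m ↔
      3 ≤ m ∧ s (m - 3) = true ∧ s (m - 3 + 1) = true ∧ s (m - 3 + 2) = false := by
  unfold OccursEndingAt
  simp only [List.length]
  constructor
  · rintro ⟨hm, h⟩
    exact ⟨hm, by simpa using h ⟨0, by norm_num⟩, by simpa using h ⟨1, by norm_num⟩,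
      by simpa using h ⟨2, by norm_num⟩⟩
  · rintro ⟨hm, h0, h1, h2⟩
    refine ⟨hm, ?_⟩
    intro j
    fin_cases j <;> simp [h0, h1, h2]

lemma pad_lt {i : ℕ} (v : Fin i → Bool) {k : ℕ} (h : k < i) :
    padFalse v k = v ⟨k, h⟩ := dif_pos h

/-- Extend a string of length `i - 3` by appending `H H T`. -/
def extHHT (i : ℕ) (u : Fin (i - 3) → Bool) : Fin i → Bool :=
  fun j => if h : (j : ℕ) < i - 3 then u ⟨j, h⟩ else decide ((j : ℕ) + 1 < i)

lemma pad_ext (i : ℕ) (u : Fin (i - 3) → Bool) {k : ℕ} (hk : k < i) :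
    padFalse (extHHT i u) k =
      if h : k < i - 3 then u ⟨k, h⟩ else decide (k + 1 < i) := by
  rw [pad_lt _ hk]; rfl

lemma pad_ext_low (i : ℕ) (u : Fin (i - 3) → Bool) {k : ℕ} (hk : k < i - 3) :
    padFalse (extHHT i u) k = padFalse u k := by
  rw [pad_ext i u (by omega), dif_pos hk, pad_lt u hk]

def equivHHT (i : ℕ) (hi : 3 ≤ i) :
    {v : Fin i → Bool // FirstOccurEndsAt [true, true, false] (padFalse v) i} ≃
    {u : Fin (i - 3) → Bool //
      ∀ m ≤ i - 3, ¬ OccursEndingAt [true, true, false] (padFalse u) m} where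
  toFun := fun ⟨v, hv⟩ => ⟨fun j => v ⟨j, by omega⟩, by
    intro m hm hocc
    rw [occ_iff] at hocc
    obtain ⟨h3, h0, h1, h2⟩ := hocc
    apply hv.2 m (by omega)
    rw [occ_iff]
    refine ⟨h3, ?_, ?_, ?_⟩
    · rw [pad_lt v (show m - 3 < i by omega)]
      rw [pad_lt _ (show m - 3 < i - 3 by omega)] at h0
      exact h0
    · rw [pad_lt v (show m - 3 + 1 < i by omega)]
      rw [pad_lt _ (show m - 3 + 1 < i - 3 by omega)] at h1
      exact h1
    · rw [pad_lt v (show m - 3 + 2 < i by omega)]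
      rw [pad_lt _ (show m - 3 + 2 < i - 3 by omega)] at h2
      exact h2⟩
  invFun := fun ⟨u, hu⟩ => ⟨extHHT i u, by
    constructor
    · rw [occ_iff]
      refine ⟨hi, ?_, ?_, ?_⟩
      · rw [pad_ext i u (show i - 3 < i by omega), dif_neg (by omega)]
        simp; omega
      · rw [pad_ext i u (show i - 3 + 1 < i by omega), dif_neg (by omega)]
        simp; omega
      · rw [pad_ext i u (show i - 3 + 2 < i by omega), dif_neg (by omega)]
        simp; omega
    · intro k hk hocc
      rw [occ_iff] at hocc
      obtain ⟨h3, h0, h1, h2⟩ := hocc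
      rcases Nat.lt_or_ge k (i - 2) with hkn | hkn
      · -- k ≤ i - 3
        apply hu k (by omega)
        rw [occ_iff]
        refine ⟨h3, ?_, ?_, ?_⟩
        · rw [← pad_ext_low i u (show k - 3 < i - 3 by omega)]; exact h0
        · rw [← pad_ext_low i u (show k - 3 + 1 < i - 3 by omega)]; exact h1
        · rw [← pad_ext_low i u (show k - 3 + 2 < i - 3 by omega)]; exact h2
      · rcases Nat.lt_or_ge k (i - 1) with hk1 | hk1
        · -- k = i - 2, last position k - 1 = i - 3 carries `true`
          rw [show k - 3 + 2 = i - 3 by omega,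
            pad_ext i u (show i - 3 < i by omega), dif_neg (by omega)] at h2
          simp at h2; omega
        · -- k = i - 1, last position k - 1 = i - 2 carries `true`
          rw [show k - 3 + 2 = i - 2 by omega,
            pad_ext i u (show i - 2 < i by omega), dif_neg (by omega)] at h2
          simp at h2; omega⟩
  left_inv := by
    rintro ⟨v, hv⟩
    apply Subtype.ext
    funext j
    show (if h : (j : ℕ) < i - 3 then v ⟨(j : ℕ), by omega⟩
      else decide ((j : ℕ) + 1 < i)) = v j
    by_cases h : (j : ℕ) < i - 3
    · rw [dif_pos h]
    · rw [dif_neg h]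
      have hocc := hv.1
      rw [occ_iff] at hocc
      obtain ⟨_, h0, h1, h2⟩ := hocc
      rw [pad_lt v (show i - 3 < i by omega)] at h0
      rw [pad_lt v (show i - 3 + 1 < i by omega)] at h1
      rw [pad_lt v (show i - 3 + 2 < i by omega)] at h2
      have hj : (j : ℕ) = i - 3 ∨ (j : ℕ) = i - 2 ∨ (j : ℕ) = i - 1 := by
        have := j.2; omega
      rcases hj with hj | hj | hj
      · have hje : j = ⟨i - 3, by omega⟩ := Fin.ext (by simpa using hj)
        rw [hje, h0]; simp; omega
      · have hje : j = ⟨i - 3 + 1, by omega⟩ := Fin.ext (by simp; omega)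
        rw [hje, h1]; simp; omega
      · have hje : j = ⟨i - 3 + 2, by omega⟩ := Fin.ext (by simp; omega)
        rw [hje, h2]; simp; omega
  right_inv := by
    rintro ⟨u, hu⟩
    apply Subtype.ext
    funext j
    show (if h : (j : ℕ) < i - 3 then u ⟨(j : ℕ), h⟩ else _) = u j
    rw [dif_pos j.2]

/-- For `i ≥ 3`, the number of HHT-first-timer binary strings of length `i`
equals the number of binary strings of length `i - 3` that avoid the
substring HHT. -/
theorem firstTimerCount_HHT_avoiders (i : ℕ) (hi : 3 ≤ i) :
    firstTimerCount [true, true, false] i =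
      Nat.card {v : Fin (i - 3) → Bool //
        ∀ m ≤ i - 3, ¬ OccursEndingAt [true, true, false] (padFalse v) m} :=
  Nat.card_congr (equivHHT i hi)
end

section
/- In any infinite binary sequence, the occurrences of HHT and THH strictly alternate: between any two consecutive occurrences of HHT there is exactly one occurrence of THH, and vice versa; consequently whichever of the two patterns occurs first, its k-th occurrence precedes the k-th occurrence of the other pattern for every k. -/
lemma occ3_iff (s : ℕ → Bool) (a b c : Bool) (m : ℕ) :
    OccursEndingAt [a, b, c] s m ↔
      3 ≤ m ∧ s (m - 3) = a ∧ s (m - 2) = b ∧ s (m - 1) = c := by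
  unfold OccursEndingAt
  simp only [List.length_cons, List.length_nil, Nat.zero_add]
  constructor
  · rintro ⟨hm, h⟩
    refine ⟨hm, ?_, ?_, ?_⟩
    · simpa using h ⟨0, by norm_num⟩
    · have := h ⟨1, by norm_num⟩
      simpa [show m - 3 + 1 = m - 2 by omega] using this
    · have := h ⟨2, by norm_num⟩
      simpa [show m - 3 + 2 = m - 1 by omega] using this
  · rintro ⟨hm, h1, h2, h3⟩
    refine ⟨hm, ?_⟩
    intro j
    fin_cases j
    · simpa using h1
    · simpa [show m - 3 + 1 = m - 2 by omega] using h2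
    · simpa [show m - 3 + 2 = m - 1 by omega] using h3

/-- Between two THH occurrences there is an HHT occurrence. -/
lemma hht_between (s : ℕ → Bool) {n₁ n₂ : ℕ}
    (h1 : OccursEndingAt [false, true, true] s n₁)
    (h2 : OccursEndingAt [false, true, true] s n₂) (hlt : n₁ < n₂) :
    ∃ m, n₁ < m ∧ m < n₂ ∧ OccursEndingAt [true, true, false] s m := by
  rw [occ3_iff] at h1 h2
  obtain ⟨hn1, a1, a2, a3⟩ := h1
  obtain ⟨hn2, b1, b2, b3⟩ := h2
  have hge : n₁ ≤ n₂ - 3 := by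
    have e1 : n₂ - 3 ≠ n₁ - 2 := fun h => by rw [h, a2] at b1; simp at b1
    have e2 : n₂ - 3 ≠ n₁ - 1 := fun h => by rw [h, a3] at b1; simp at b1
    omega
  have hex : ∃ p, n₁ ≤ p ∧ s p = false := ⟨n₂ - 3, hge, b1⟩
  classical
  set p := Nat.find hex with hp
  obtain ⟨hp1, hp2⟩ := Nat.find_spec hex
  have hmin : ∀ q, q < p → n₁ ≤ q → s q = true := by
    intro q hq hq'
    have := Nat.find_min hex hq
    push_neg at this
    have := this hq'
    simpa using this
  have hple : p ≤ n₂ - 3 := Nat.find_min' hex ⟨hge, b1⟩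
  have htr : ∀ q, n₁ - 2 ≤ q → q < p → s q = true := by
    intro q hq1 hq2
    rcases Nat.lt_or_ge q n₁ with h | h
    · rcases (show q = n₁ - 2 ∨ q = n₁ - 1 by omega) with rfl | rfl
      · exact a2
      · exact a3
    · exact hmin q hq2 h
  refine ⟨p + 1, by omega, by omega, ?_⟩
  rw [occ3_iff]
  refine ⟨by omega, ?_, ?_, by simpa using hp2⟩
  · have : s (p - 2) = true := htr _ (by omega) (by omega)
    simpa [show p + 1 - 3 = p - 2 by omega] using this
  · have : s (p - 1) = true := htr _ (by omega) (by omega)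
    simpa [show p + 1 - 2 = p - 1 by omega] using this

/-- Between two HHT occurrences there is a THH occurrence. -/
lemma thh_between (s : ℕ → Bool) {m₁ m₂ : ℕ}
    (h1 : OccursEndingAt [true, true, false] s m₁)
    (h2 : OccursEndingAt [true, true, false] s m₂) (hlt : m₁ < m₂) :
    ∃ n, m₁ < n ∧ n < m₂ ∧ OccursEndingAt [false, true, true] s n := by
  rw [occ3_iff] at h1 h2
  obtain ⟨hn1, a1, a2, a3⟩ := h1
  obtain ⟨hn2, b1, b2, b3⟩ := h2
  have hge : m₁ - 1 ≤ m₂ - 3 := by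
    have e1 : m₂ - 3 ≠ m₁ - 1 := fun h => by rw [h, a3] at b1; simp at b1
    have e2 : m₂ - 2 ≠ m₁ - 1 := fun h => by rw [h, a3] at b2; simp at b2
    omega
  classical
  set q := Nat.findGreatest (fun p => s p = false) (m₂ - 3) with hq
  have hqspec : s q = false := Nat.findGreatest_spec (P := fun p => s p = false) hge a3
  have hqle : q ≤ m₂ - 3 := Nat.findGreatest_le _
  have hqge : m₁ - 1 ≤ q := Nat.le_findGreatest (P := fun p => s p = false) hge a3
  have hqne : q ≠ m₂ - 3 := fun h => by rw [h, b1] at hqspec; simp at hqspec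
  have hmax : ∀ r, q < r → r ≤ m₂ - 3 → s r = true := by
    intro r h1' h2'
    have := Nat.findGreatest_is_greatest (P := fun p => s p = false) h1' h2'
    simpa using this
  refine ⟨q + 3, by omega, by omega, ?_⟩
  rw [occ3_iff]
  refine ⟨by omega, by simpa using hqspec, ?_, ?_⟩
  · have : s (q + 1) = true := hmax _ (by omega) (by omega)
    simpa [show q + 3 - 2 = q + 1 by omega] using this
  · rcases Nat.lt_or_ge (q + 2) (m₂ - 2) with h | h
    · have : s (q + 2) = true := hmax _ (by omega) (by omega)
      simpa [show q + 3 - 1 = q + 2 by omega] using this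
    · have : q + 2 = m₂ - 2 := by omega
      rw [show q + 3 - 1 = q + 2 by omega, this]
      exact b2

lemma nth_alt (p q : ℕ → Prop) (hp : (setOf p).Infinite) (hq : (setOf q).Infinite)
    (hbet : ∀ n₁ n₂, q n₁ → q n₂ → n₁ < n₂ → ∃ m, n₁ < m ∧ m < n₂ ∧ p m)
    (h0 : Nat.nth p 0 < Nat.nth q 0) : ∀ k, Nat.nth p k < Nat.nth q k := by
  intro k
  induction k with
  | zero => exact h0
  | succ k ih =>
    have hqk : q (Nat.nth q k) := Nat.nth_mem_of_infinite hq k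
    have hqk1 : q (Nat.nth q (k + 1)) := Nat.nth_mem_of_infinite hq (k + 1)
    have hlt : Nat.nth q k < Nat.nth q (k + 1) := (Nat.nth_lt_nth hq).2 (by omega)
    obtain ⟨m, hm1, hm2, hpm⟩ := hbet _ _ hqk hqk1 hlt
    classical
    haveI : DecidablePred p := Classical.decPred p
    have hmem : Nat.nth p (Nat.count p m) = m := Nat.nth_count hpm
    have h1 : Nat.nth p k < Nat.nth p (Nat.count p m) := by rw [hmem]; omega
    have hk : k < Nat.count p m := (Nat.nth_lt_nth hp).1 h1
    have h2 : Nat.nth p (k + 1) ≤ Nat.nth p (Nat.count p m) := (Nat.nth_le_nth hp).2 hk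
    omega


/-- In any infinite binary sequence in which both HHT and THH occur infinitely
often, the occurrences of HHT and THH strictly alternate: between any two
consecutive occurrences of HHT there is exactly one occurrence of THH, and
vice versa; consequently whichever of the two patterns occurs first, its
`k`-th occurrence precedes the `k`-th occurrence of the other pattern for
every `k`. -/
theorem HHT_THH_alternate (s : ℕ → Bool)
    (hA : {m : ℕ | OccursEndingAt [true, true, false] s m}.Infinite)
    (hB : {m : ℕ | OccursEndingAt [false, true, true] s m}.Infinite) :
    (∀ m₁ m₂ : ℕ, OccursEndingAt [true, true, false] s m₁ →
        OccursEndingAt [true, true, false] s m₂ → m₁ < m₂ →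
        (∀ m, m₁ < m → m < m₂ → ¬ OccursEndingAt [true, true, false] s m) →
        ∃! m : ℕ, m₁ < m ∧ m < m₂ ∧ OccursEndingAt [false, true, true] s m) ∧
    (∀ m₁ m₂ : ℕ, OccursEndingAt [false, true, true] s m₁ →
        OccursEndingAt [false, true, true] s m₂ → m₁ < m₂ →
        (∀ m, m₁ < m → m < m₂ → ¬ OccursEndingAt [false, true, true] s m) →
        ∃! m : ℕ, m₁ < m ∧ m < m₂ ∧ OccursEndingAt [true, true, false] s m) ∧
    ((Nat.nth (fun m => OccursEndingAt [true, true, false] s m) 0 <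
        Nat.nth (fun m => OccursEndingAt [false, true, true] s m) 0 →
        ∀ k : ℕ, Nat.nth (fun m => OccursEndingAt [true, true, false] s m) k <
          Nat.nth (fun m => OccursEndingAt [false, true, true] s m) k) ∧
      (Nat.nth (fun m => OccursEndingAt [false, true, true] s m) 0 <
        Nat.nth (fun m => OccursEndingAt [true, true, false] s m) 0 →
        ∀ k : ℕ, Nat.nth (fun m => OccursEndingAt [false, true, true] s m) k <
          Nat.nth (fun m => OccursEndingAt [true, true, false] s m) k)) := by
  refine ⟨?_, ?_, ?_, ?_⟩
  · intro m₁ m₂ h1 h2 hlt hnone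
    obtain ⟨n, hn1, hn2, hn3⟩ := thh_between s h1 h2 hlt
    refine ⟨n, ⟨hn1, hn2, hn3⟩, ?_⟩
    rintro y ⟨hy1, hy2, hy3⟩
    by_contra hne
    rcases lt_or_gt_of_ne hne with h | h
    · obtain ⟨m, ha, hb, hc⟩ := hht_between s hy3 hn3 h
      exact hnone m (by omega) (by omega) hc
    · obtain ⟨m, ha, hb, hc⟩ := hht_between s hn3 hy3 h
      exact hnone m (by omega) (by omega) hc
  · intro m₁ m₂ h1 h2 hlt hnone
    obtain ⟨n, hn1, hn2, hn3⟩ := hht_between s h1 h2 hlt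
    refine ⟨n, ⟨hn1, hn2, hn3⟩, ?_⟩
    rintro y ⟨hy1, hy2, hy3⟩
    by_contra hne
    rcases lt_or_gt_of_ne hne with h | h
    · obtain ⟨m, ha, hb, hc⟩ := thh_between s hy3 hn3 h
      exact hnone m (by omega) (by omega) hc
    · obtain ⟨m, ha, hb, hc⟩ := thh_between s hn3 hy3 h
      exact hnone m (by omega) (by omega) hc
  · intro h0
    exact nth_alt _ _ hA hB (fun n₁ n₂ a b c => hht_between s a b c) h0
  · intro h0
    exact nth_alt _ _ hB hA (fun n₁ n₂ a b c => thh_between s a b c) h0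
end
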